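/- arXiv:2007.03986 — 2 statements merged into one kernel-verified Lean document; each statement's English description precedes it below -/
import Mathlib

section
/- Let {AB, CD} be a proper pair of collinear oriented prime segments defining the 2-threshold function f = f_AB ∧ f_CD on the grid G. Then the set of true points of f equals the set of integer grid points lying on the segment AC. -/
/-- Cast an integer point to the real plane. -/
def toR (p : ℤ × ℤ) : ℝ × ℝ := ((p.1 : ℝ), (p.2 : ℝ))

/-- Signed area determinant Δ(P,Q,R). -/
def Det (P Q R : ℤ × ℤ) : ℤ :=
  (Q.1 - P.1) * (R.2 - P.2) - (Q.2 - P.2) * (R.1 - P.1)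

/-- Two integer points are adjacent: distinct, and the segment between them
contains no integer point other than the endpoints. -/
def Adjacent (A B : ℤ × ℤ) : Prop :=
  A ≠ B ∧ ∀ C : ℤ × ℤ, toR C ∈ segment ℝ (toR A) (toR B) → C = A ∨ C = B

/-- The {0,1}-valued (Bool-valued) function defined by the oriented prime
segment AB: on the line through A and B it is true iff the point is strictly
closer to A than to B; off the line it is true iff triangle A B X is
counterclockwise. -/
def fseg (A B X : ℤ × ℤ) : Bool :=
  if Det A B X = 0 then
    decide ((X.1 - A.1) ^ 2 + (X.2 - A.2) ^ 2 < (X.1 - B.1) ^ 2 + (X.2 - B.2) ^ 2)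
  else
    decide (0 < Det A B X)

/-- The grid {0,…,m−1} × {0,…,n−1} as a set of integer points. -/
def Grid (m n : ℕ) : Set (ℤ × ℤ) :=
  {p | 0 ≤ p.1 ∧ p.1 < (m : ℤ) ∧ 0 ≤ p.2 ∧ p.2 < (n : ℤ)}

/-- A pair of oriented prime segments (A,B), (C,D) is proper. -/
def ProperPair (A B C D : ℤ × ℤ) : Prop :=
  Adjacent A B ∧ Adjacent C D ∧
    fseg C D A = true ∧ fseg C D B = true ∧ fseg A B C = true ∧ fseg A B D = true

/-- f is a threshold function on the grid. -/
def IsThreshold (m n : ℕ) (f : ℤ × ℤ → Bool) : Prop :=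
  ∃ a0 a1 a2 : ℝ, ∀ p ∈ Grid m n,
    (f p = true ↔ a1 * (p.1 : ℝ) + a2 * (p.2 : ℝ) ≥ a0)

/-- f is a 2-threshold function on the grid: a conjunction of two threshold
functions. -/
def Is2Threshold (m n : ℕ) (f : ℤ × ℤ → Bool) : Prop :=
  ∃ g h : ℤ × ℤ → Bool, IsThreshold m n g ∧ IsThreshold m n h ∧
    ∀ p ∈ Grid m n, f p = (g p && h p)

/-! Since `AB` is prime, `u = B - A` is a primitive vector, so the lattice points of the line `AB`
are the points `A + t • u`, `t ∈ ℤ`, and there `f_AB` is the indicator of `t ≤ 0`. Properness and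
primality of `CD` force `C = A + c • u` and `D = C - u` with `c ≤ 0`, so on the line `f_CD` is the
indicator of `t ≥ c`. Off the line `Δ(C, D, X) = -Δ(A, B, X)`, so `f_AB` and `f_CD` never hold
together there. -/

open Set

lemma toR_add (P Q : ℤ × ℤ) : toR (P + Q) = toR P + toR Q := by
  ext <;> simp [toR]

lemma toR_zsmul (k : ℤ) (P : ℤ × ℤ) : toR (k • P) = (k : ℝ) • toR P := by
  ext <;> simp [toR]

lemma toR_injective : Function.Injective toR := by
  intro P Q h
  simp only [toR, Prod.mk.injEq, Int.cast_inj] at h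
  exact Prod.ext h.1 h.2

lemma toR_add_zsmul_mem_segment_iff {P w : ℤ × ℤ} (hw : w ≠ 0) (s t : ℤ) :
    toR (P + s • w) ∈ segment ℝ (toR P) (toR (P + t • w)) ↔ s ∈ uIcc 0 t := by
  set f : ℝ →ᵃ[ℝ] ℝ × ℝ := AffineMap.lineMap (toR P) (toR (P + w))
  have hf : ∀ k : ℤ, toR (P + k • w) = f k := by
    intro k
    rw [AffineMap.lineMap_apply, toR_add, toR_zsmul, toR_add, vsub_eq_sub, add_sub_cancel_left,
      vadd_eq_add, add_comm]
  have hinj : Function.Injective f :=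
    AffineMap.lineMap_injective ℝ fun h => hw (by simpa using toR_injective h)
  calc toR (P + s • w) ∈ segment ℝ (toR P) (toR (P + t • w))
      ↔ f s ∈ f '' segment ℝ 0 (t : ℝ) := by
        rw [image_segment, hf, hf, AffineMap.lineMap_apply_zero]
    _ ↔ s ∈ uIcc 0 t := by
        rw [hinj.mem_set_image, segment_eq_uIcc, mem_uIcc, mem_uIcc]
        norm_cast

lemma Collinear.det_eq_zero {s : Set (ℝ × ℝ)} (hs : Collinear ℝ s) {A B X : ℤ × ℤ}
    (hA : toR A ∈ s) (hB : toR B ∈ s) (hX : toR X ∈ s) : Det A B X = 0 := by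
  obtain ⟨v, hv⟩ := (collinear_iff_of_mem hA).1 hs
  obtain ⟨b, hb⟩ := hv _ hB
  obtain ⟨x, hx⟩ := hv _ hX
  simp only [toR, vadd_eq_add, Prod.ext_iff, Prod.fst_add, Prod.snd_add, Prod.smul_fst,
    Prod.smul_snd, smul_eq_mul] at hb hx
  have : (Det A B X : ℝ) = 0 := by
    simp only [Det, Int.cast_sub, Int.cast_mul]
    rw [hb.1, hb.2, hx.1, hx.2]; ring
  exact_mod_cast this

lemma Collinear.det_eq_zero_of_mem_segment {s : Set (ℝ × ℝ)} (hs : Collinear ℝ s)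
    {A B C X : ℤ × ℤ} (hA : toR A ∈ s) (hB : toR B ∈ s) (hC : toR C ∈ s)
    (hX : toR X ∈ segment ℝ (toR A) (toR C)) : Det A B X = 0 := by
  have hspan : toR X ∈ affineSpan ℝ s :=
    affineSpan_mono ℝ (insert_subset_iff.2 ⟨hA, singleton_subset_iff.2 hC⟩)
      (mem_segment_iff_wbtw.1 hX).mem_affineSpan
  exact ((collinear_insert_iff_of_mem_affineSpan hspan).2 hs).det_eq_zero
    (mem_insert_of_mem _ hA) (mem_insert_of_mem _ hB) (mem_insert _ _)

lemma Adjacent.eq_one_or_eq_neg_one {P w : ℤ × ℤ} {k : ℤ} (h : Adjacent P (P + k • w)) :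
    k = 1 ∨ k = -1 := by
  have hw : w ≠ 0 := by rintro rfl; exact h.1 (by simp)
  have hk : k ≠ 0 := by rintro rfl; exact h.1 (by simp)
  have hsign : k.sign ∈ uIcc 0 k := by
    rcases hk.lt_or_gt with hk | hk
    · simp [Int.sign_eq_neg_one_of_neg hk, mem_uIcc]; omega
    · simp [Int.sign_eq_one_of_pos hk, mem_uIcc]; omega
  rcases h.2 _ ((toR_add_zsmul_mem_segment_iff hw _ _).2 hsign) with hP | hk'
  · rcases smul_eq_zero.1 (add_eq_left.1 hP) with hs | hs
    · exact absurd (Int.sign_eq_zero_iff_zero.1 hs) hk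
    · exact absurd hs hw
  · have := smul_left_injective ℤ hw (add_left_cancel hk')
    rcases Int.sign_trichotomy k with hs | hs | hs <;> omega

lemma Adjacent.gcd_eq_one {A B : ℤ × ℤ} (h : Adjacent A B) :
    Int.gcd (B - A).1 (B - A).2 = 1 := by
  set g := Int.gcd (B - A).1 (B - A).2
  have hB : B = A + (g : ℤ) • ((B - A).1 / g, (B - A).2 / g) := by
    ext <;> simp [Int.mul_ediv_cancel' (Int.gcd_dvd_left _ _),
      Int.mul_ediv_cancel' (Int.gcd_dvd_right _ _), g]
  rw [hB] at h
  have := h.eq_one_or_eq_neg_one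
  omega

lemma exists_eq_zsmul_of_gcd_eq_one {u v : ℤ × ℤ} (hu : Int.gcd u.1 u.2 = 1)
    (h : u.1 * v.2 = u.2 * v.1) : ∃ t : ℤ, v = t • u := by
  obtain ⟨a, b, hab⟩ := Int.isCoprime_iff_gcd_eq_one.2 hu
  refine ⟨a * v.1 + b * v.2, Prod.ext ?_ ?_⟩
  · simp only [Prod.smul_fst, smul_eq_mul]; linear_combination (-v.1) * hab - b * h
  · simp only [Prod.smul_snd, smul_eq_mul]; linear_combination (-v.2) * hab + a * h

lemma Adjacent.exists_eq_add_zsmul {A B X : ℤ × ℤ} (h : Adjacent A B) (hX : Det A B X = 0) :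
    ∃ t : ℤ, X = A + t • (B - A) := by
  obtain ⟨t, ht⟩ := exists_eq_zsmul_of_gcd_eq_one h.gcd_eq_one (v := X - A) (by
    simp only [Det] at hX; simp only [Prod.fst_sub, Prod.snd_sub]; linarith)
  exact ⟨t, by rw [← ht, add_sub_cancel]⟩

lemma fseg_eq_true_iff_of_eq_add_zsmul {P u Q R X : ℤ × ℤ} {a b t : ℤ} (hu : u ≠ 0)
    (hQ : Q = P + a • u) (hR : R = P + b • u) (hX : X = P + t • u) :
    fseg Q R X = true ↔ 2 * (t - a) * (b - a) < (b - a) ^ 2 := by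
  subst hQ hR hX
  have hN : 0 < u.1 ^ 2 + u.2 ^ 2 := by
    rcases ne_or_eq u.1 0 with h | h
    · positivity
    · have : u.2 ≠ 0 := fun h' => hu (Prod.ext h h')
      positivity
  have hdet : Det (P + a • u) (P + b • u) (P + t • u) = 0 := by
    simp only [Det, Prod.fst_add, Prod.snd_add, Prod.smul_fst, Prod.smul_snd, smul_eq_mul]; ring
  simp only [fseg, hdet, if_true, decide_eq_true_eq, Prod.fst_add, Prod.snd_add, Prod.smul_fst,
    Prod.smul_snd, smul_eq_mul]
  have hsq : ∀ x y : ℤ,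
      (P.1 + x * u.1 - (P.1 + y * u.1)) ^ 2 + (P.2 + x * u.2 - (P.2 + y * u.2)) ^ 2 =
        (x - y) ^ 2 * (u.1 ^ 2 + u.2 ^ 2) := fun x y => by ring
  rw [hsq, hsq, mul_lt_mul_iff_left₀ hN,
    show (t - b) ^ 2 = (t - a) ^ 2 - 2 * (t - a) * (b - a) + (b - a) ^ 2 by ring]
  constructor <;> intro <;> linarith

lemma det_of_eq_add_zsmul {A B C D : ℤ × ℤ} {c d : ℤ} (hC : C = A + c • (B - A))
    (hD : D = A + d • (B - A)) (X : ℤ × ℤ) : Det C D X = (d - c) * Det A B X := by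
  subst hC hD
  simp only [Det, Prod.fst_add, Prod.snd_add, Prod.fst_sub, Prod.snd_sub, Prod.smul_fst,
    Prod.smul_snd, smul_eq_mul]
  ring

lemma ProperPair.le_zero_and_eq_sub_one {A B C D : ℤ × ℤ} {c d : ℤ} (h : ProperPair A B C D)
    (hC : C = A + c • (B - A)) (hD : D = A + d • (B - A)) : c ≤ 0 ∧ d = c - 1 := by
  obtain ⟨hAB, hCD, hCDA, -, hABC, hABD⟩ := h
  have hu : B - A ≠ 0 := sub_ne_zero.2 hAB.1.symm
  have hA : A = A + (0 : ℤ) • (B - A) := by simp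
  have hB : B = A + (1 : ℤ) • (B - A) := by simp
  have hc := (fseg_eq_true_iff_of_eq_add_zsmul hu hA hB hC).1 hABC
  have hd := (fseg_eq_true_iff_of_eq_add_zsmul hu hA hB hD).1 hABD
  have hdc : d - c = 1 ∨ d - c = -1 := by
    refine Adjacent.eq_one_or_eq_neg_one (P := C) (w := B - A) ?_
    convert hCD using 1
    rw [hC, hD, sub_smul]; abel
  have hca := (fseg_eq_true_iff_of_eq_add_zsmul hu hC hD hA).1 hCDA
  -- if `D = C + u`, then `f_CD(A)` forces `c = 0`, that is `D = B`, contradicting `f_AB(D)`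
  norm_num at hc hd
  rcases hdc with hdc | hdc <;> rw [hdc] at hca <;> norm_num at hca <;> omega

lemma fseg_eq_true_iff_of_det_ne_zero {A B X : ℤ × ℤ} (h : Det A B X ≠ 0) :
    fseg A B X = true ↔ 0 < Det A B X := by
  simp [fseg, h]

theorem stmt13_general (m n : ℕ) (A B C D : ℤ × ℤ)
    (hcol : Collinear ℝ ({toR A, toR B, toR C, toR D} : Set (ℝ × ℝ)))
    (hprop : ProperPair A B C D) :
    ∀ X ∈ Grid m n,
      ((fseg A B X && fseg C D X) = true ↔ toR X ∈ segment ℝ (toR A) (toR C)) := by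
  intro X _
  have hAB := hprop.1
  have hu : B - A ≠ 0 := sub_ne_zero.2 hAB.1.symm
  have hCmem : toR C ∈ ({toR A, toR B, toR C, toR D} : Set (ℝ × ℝ)) := by simp
  obtain ⟨c, hC⟩ := hAB.exists_eq_add_zsmul (hcol.det_eq_zero (by simp) (by simp) hCmem)
  obtain ⟨d, hD⟩ :=
    hAB.exists_eq_add_zsmul (X := D) (hcol.det_eq_zero (by simp) (by simp) (by simp))
  obtain ⟨hc, rfl⟩ := hprop.le_zero_and_eq_sub_one hC hD
  by_cases hX : Det A B X = 0
  · obtain ⟨t, rfl⟩ := hAB.exists_eq_add_zsmul hX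
    rw [Bool.and_eq_true,
      fseg_eq_true_iff_of_eq_add_zsmul hu (a := 0) (b := 1) (by simp) (by simp) rfl,
      fseg_eq_true_iff_of_eq_add_zsmul hu hC hD rfl, hC, toR_add_zsmul_mem_segment_iff hu,
      uIcc_of_ge hc, mem_Icc]
    norm_num
    omega
  · have hCD : Det C D X ≠ 0 := by rw [det_of_eq_add_zsmul hC hD]; simpa using hX
    rw [Bool.and_eq_true, fseg_eq_true_iff_of_det_ne_zero hX, fseg_eq_true_iff_of_det_ne_zero hCD,
      det_of_eq_add_zsmul hC hD]
    exact iff_of_false (fun h => by linarith [h.1, h.2])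
      (hX ∘ hcol.det_eq_zero_of_mem_segment (by simp) (by simp) hCmem)

/-- for a proper pair of collinear segments {AB, CD} defining
f = f_AB ∧ f_CD on the grid, the true points of f are exactly the grid points
on the segment AC. -/
theorem stmt13 (m n : ℕ) (A B C D : ℤ × ℤ)
    (hA : A ∈ Grid m n) (hB : B ∈ Grid m n)
    (hC : C ∈ Grid m n) (hD : D ∈ Grid m n)
    (hcol : Collinear ℝ ({toR A, toR B, toR C, toR D} : Set (ℝ × ℝ)))
    (hprop : ProperPair A B C D) :
    ∀ X ∈ Grid m n,
      ((fseg A B X && fseg C D X) = true ↔ toR X ∈ segment ℝ (toR A) (toR C)) :=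
  stmt13_general m n A B C D hcol hprop
end

section
/- Let {AB, AD} be a proper pair of oriented prime segments sharing their first endpoint A, defining the function f = f_AB ∧ f_AD on the grid G. Then the set of true points of f is exactly the singleton {A}. -/
/-! Since `Det A D B = -Det A B D`, the conditions `f_AD(B)` and `f_AB(D)` can only both hold
when `A`, `B`, `D` are collinear. Adjacency makes `B - A` and `D - A` primitive lattice vectors,
so `D - A = ±(B - A)`, and the distance conditions leave only `D - A = -(B - A)`. For this `D`
the same sign argument puts every true point `X` on the line, where `X = A + k • (B - A)` with
`k ∈ ℤ`, and `f_AB(X)`, `f_AD(X)` read `k ≤ 0` and `-k ≤ 0`. -/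

lemma Det_swap (A B C : ℤ × ℤ) : Det A C B = -Det A B C := by
  unfold Det; ring

lemma Det_eq_neg_of_sub_eq_neg_sub {A B D : ℤ × ℤ} (h : D - A = -(B - A)) (X : ℤ × ℤ) :
    Det A D X = -Det A B X := by
  obtain ⟨h₁, h₂⟩ := Prod.ext_iff.1 h
  simp only [Prod.fst_sub, Prod.snd_sub, Prod.fst_neg, Prod.snd_neg] at h₁ h₂
  unfold Det
  linear_combination (X.2 - A.2) * h₁ - (X.1 - A.1) * h₂

lemma Det_add_smul_sub (A B : ℤ × ℤ) (k : ℤ) : Det A B (A + k • (B - A)) = 0 := by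
  simp only [Det, Prod.fst_add, Prod.snd_add, Prod.smul_fst, Prod.smul_snd, Prod.fst_sub,
    Prod.snd_sub, smul_eq_mul]
  ring

lemma Det_eq_zero_of_fseg_of_fseg {A B X P Q Y : ℤ × ℤ} (h₁ : fseg A B X = true)
    (h₂ : fseg P Q Y = true) (hneg : Det P Q Y = -Det A B X) : Det A B X = 0 := by
  by_contra h
  have h' : Det P Q Y ≠ 0 := by rw [hneg]; exact neg_ne_zero.mpr h
  simp only [fseg, if_neg h, if_neg h', decide_eq_true_eq] at h₁ h₂
  omega

lemma fseg_add_smul_sub_iff {A B : ℤ × ℤ} (hAB : A ≠ B) (k : ℤ) :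
    fseg A B (A + k • (B - A)) = true ↔ k ≤ 0 := by
  have hu : 0 < (B.1 - A.1) ^ 2 + (B.2 - A.2) ^ 2 := by
    have : B.1 - A.1 ≠ 0 ∨ B.2 - A.2 ≠ 0 := by
      by_contra! h
      exact hAB (Prod.ext (by omega) (by omega)).symm
    rcases this with h | h <;> positivity
  simp only [fseg, Det_add_smul_sub, if_pos, decide_eq_true_eq, Prod.fst_add, Prod.snd_add,
    Prod.smul_fst, Prod.smul_snd, Prod.fst_sub, Prod.snd_sub, smul_eq_mul]
  -- the two squared distances differ by `(1 - 2k) |B - A|²`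
  constructor
  · intro h
    by_contra! hk
    nlinarith
  · intro hk
    nlinarith

lemma fseg_self_left {A B : ℤ × ℤ} (hAB : A ≠ B) : fseg A B A = true := by
  simpa using fseg_add_smul_sub_iff hAB 0

lemma exists_eq_add_smul_sub_of_Det_eq_zero {A B X : ℤ × ℤ}
    (hcop : IsCoprime (B.1 - A.1) (B.2 - A.2)) (hdet : Det A B X = 0) :
    ∃ k : ℤ, X = A + k • (B - A) := by
  obtain ⟨a, b, hab⟩ := hcop
  refine ⟨a * (X.1 - A.1) + b * (X.2 - A.2), Prod.ext ?_ ?_⟩ <;>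
    simp only [Det, Prod.fst_add, Prod.snd_add, Prod.smul_fst, Prod.smul_snd, Prod.fst_sub,
      Prod.snd_sub, smul_eq_mul] at hdet ⊢
  · linear_combination -(X.1 - A.1) * hab - b * hdet
  · linear_combination -(X.2 - A.2) * hab + a * hdet

/-- If `g = gcd (B - A) > 1`, the lattice point `A + (B - A) / g` lies strictly inside `[A, B]`. -/
lemma Adjacent.isCoprime {A B : ℤ × ℤ} (h : Adjacent A B) :
    IsCoprime (B.1 - A.1) (B.2 - A.2) := by
  obtain ⟨hne, hseg⟩ := h
  rw [Int.isCoprime_iff_gcd_eq_one]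
  by_contra hg1
  obtain ⟨a, ha⟩ := Int.gcd_dvd_left (B.1 - A.1) (B.2 - A.2)
  obtain ⟨b, hb⟩ := Int.gcd_dvd_right (B.1 - A.1) (B.2 - A.2)
  set g := Int.gcd (B.1 - A.1) (B.2 - A.2)
  have hg0 : g ≠ 0 := fun h0 => hne <| by
    obtain ⟨h₁, h₂⟩ := Int.gcd_eq_zero_iff.1 h0
    exact Prod.ext (by omega) (by omega)
  have hgR : (0 : ℝ) < g := by exact_mod_cast Nat.pos_of_ne_zero hg0
  have hmem : toR (A + (a, b)) ∈ segment ℝ (toR A) (toR B) := by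
    refine ⟨1 - (g : ℝ)⁻¹, (g : ℝ)⁻¹, ?_, by positivity, by ring, ?_⟩
    · exact sub_nonneg.2 (inv_le_one_of_one_le₀ (by exact_mod_cast Nat.one_le_iff_ne_zero.2 hg0))
    · have ha' : (B.1 : ℝ) - A.1 = g * a := by exact_mod_cast ha
      have hb' : (B.2 : ℝ) - A.2 = g * b := by exact_mod_cast hb
      ext <;> simp only [toR, Prod.smul_mk, Prod.mk_add_mk, smul_eq_mul, Prod.fst_add,
        Prod.snd_add, Int.cast_add] <;> field_simp
      · linear_combination ha'
      · linear_combination hb'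
  have hab : a = 0 ∧ b = 0 := by
    rcases hseg _ hmem with hC | hC <;> rw [Prod.ext_iff] at hC <;>
      simp only [Prod.fst_add, Prod.snd_add, add_eq_left] at hC
    · exact hC
    · have hg1' : (g : ℤ) - 1 ≠ 0 := by omega
      constructor
      · exact (mul_eq_zero.1 (by linarith : ((g : ℤ) - 1) * a = 0)).resolve_left hg1'
      · exact (mul_eq_zero.1 (by linarith : ((g : ℤ) - 1) * b = 0)).resolve_left hg1'
  apply hne
  exact Prod.ext (by rw [hab.1, mul_zero] at ha; omega) (by rw [hab.2, mul_zero] at hb; omega)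

lemma ProperPair.sub_eq_neg_sub {A B D : ℤ × ℤ} (h : ProperPair A B A D) :
    D - A = -(B - A) := by
  obtain ⟨hAB, hAD, -, hDB, -, hBD⟩ := h
  have hBD₀ : Det A B D = 0 := Det_eq_zero_of_fseg_of_fseg hBD hDB (Det_swap A B D)
  have hDB₀ : Det A D B = 0 := by rw [Det_swap, hBD₀, neg_zero]
  obtain ⟨j, hj⟩ := exists_eq_add_smul_sub_of_Det_eq_zero hAB.isCoprime hBD₀
  obtain ⟨i, hi⟩ := exists_eq_add_smul_sub_of_Det_eq_zero hAD.isCoprime hDB₀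
  have hj₀ : j ≤ 0 := (fseg_add_smul_sub_iff hAB.1 j).1 (hj ▸ hBD)
  have hi₀ : i ≤ 0 := (fseg_add_smul_sub_iff hAD.1 i).1 (hi ▸ hDB)
  have hDA : D - A = j • (B - A) := by rw [hj, add_sub_cancel_left]
  have hBA : B - A = i • (D - A) := by rw [hi, add_sub_cancel_left]
  have hij : (i * j) • (B - A) = (1 : ℤ) • (B - A) := by
    rw [mul_smul, ← hDA, ← hBA, one_smul]
  have hij₁ : i * j = 1 := smul_left_injective ℤ (sub_ne_zero.2 hAB.1.symm) hij
  rcases Int.eq_one_or_neg_one_of_mul_eq_one' hij₁ with ⟨-, rfl⟩ | ⟨-, rfl⟩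
  · omega
  · rw [hDA, neg_one_smul]

theorem stmt14_general (m n : ℕ) (A B D : ℤ × ℤ)
    (hprop : ProperPair A B A D) :
    ∀ X ∈ Grid m n, ((fseg A B X && fseg A D X) = true ↔ X = A) := by
  have hAB : A ≠ B := hprop.1.1
  have hAD : A ≠ D := hprop.2.1.1
  have hDA : D - A = -(B - A) := hprop.sub_eq_neg_sub
  intro X _
  rw [Bool.and_eq_true]
  constructor
  · rintro ⟨hBX, hDX⟩
    obtain ⟨k, rfl⟩ := exists_eq_add_smul_sub_of_Det_eq_zero hprop.1.isCoprime
      (Det_eq_zero_of_fseg_of_fseg hBX hDX (Det_eq_neg_of_sub_eq_neg_sub hDA _))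
    have hk : k ≤ 0 := (fseg_add_smul_sub_iff hAB k).1 hBX
    have hk' : -k ≤ 0 := by
      rw [show B - A = -(D - A) by rw [hDA, neg_neg], smul_neg, ← neg_smul] at hDX
      exact (fseg_add_smul_sub_iff hAD (-k)).1 hDX
    rw [show k = 0 by omega, zero_smul, add_zero]
  · rintro rfl
    exact ⟨fseg_self_left hAB, fseg_self_left hAD⟩

/-- for a proper pair of segments {AB, AD} sharing their first
endpoint A, the set of true points of f = f_AB ∧ f_AD is exactly {A}. -/
theorem stmt14 (m n : ℕ) (A B D : ℤ × ℤ)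
    (hA : A ∈ Grid m n) (hB : B ∈ Grid m n) (hD : D ∈ Grid m n)
    (hprop : ProperPair A B A D) :
    ∀ X ∈ Grid m n, ((fseg A B X && fseg A D X) = true ↔ X = A) :=
  stmt14_general m n A B D hprop
end
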